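/- arXiv:math/0606696 — 11 statements merged into one kernel-verified Lean document; each statement's English description precedes it below -/
import Mathlib

section
/- Let A be a commutative ring and E an A-module. The Krull dimension of the trivial extension R = A ⋉ E equals the Krull dimension of A. -/
open PrimeSpectrum

/-- `Spec S` is the zero locus of `ker f`, which is all of `Spec R` since every prime contains
the nilradical. -/
theorem ringKrullDim_eq_of_surjective_of_ker_le_nilradical {R S : Type*} [CommRing R] [CommRing S]
    (f : R →+* S) (hf : Function.Surjective f) (hker : RingHom.ker f ≤ nilradical R) :
    ringKrullDim S = ringKrullDim R := by
  have hzeroLocus : zeroLocus (RingHom.ker f : Set R) = Set.univ :=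
    Set.eq_univ_of_univ_subset <| zeroLocus_nilradical (R := R) ▸ zeroLocus_anti_mono hker
  exact Order.krullDim_eq_of_orderIso <|
    (Ideal.primeSpectrumOrderIsoZeroLocusOfSurj f hf rfl).trans <|
      (OrderIso.setCongr _ _ hzeroLocus).trans OrderIso.Set.univ

theorem Ideal.le_nilradical_of_pow_eq_bot {R : Type*} [CommSemiring R] {I : Ideal R} {n : ℕ}
    (hn : n ≠ 0) (hI : I ^ n = ⊥) : I ≤ nilradical R := by
  rw [nilradical, Ideal.zero_eq_bot, ← hI, Ideal.radical_pow I hn]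
  exact Ideal.le_radical

theorem TrivSqZeroExt.kerIdeal_le_nilradical (R M : Type*) [CommSemiring R] [AddCommMonoid M]
    [Module R M] [Module Rᵐᵒᵖ M] [IsCentralScalar R M] :
    kerIdeal R M ≤ nilradical (TrivSqZeroExt R M) :=
  Ideal.le_nilradical_of_pow_eq_bot two_ne_zero (kerIdeal_sq R M)

/-- The Krull dimension of the trivial extension `A ⋉ E` equals the Krull dimension of `A`. -/
theorem krullDim_trivSqZeroExt (A : Type*) [CommRing A] (E : Type*) [AddCommGroup E]
    [Module A E] [Module Aᵐᵒᵖ E] [IsCentralScalar A E] :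
    ringKrullDim (TrivSqZeroExt A E) = ringKrullDim A :=
  (ringKrullDim_eq_of_surjective_of_ker_le_nilradical (TrivSqZeroExt.fstHom A A E).toRingHom
    TrivSqZeroExt.fst_surjective (TrivSqZeroExt.kerIdeal_le_nilradical A E)).symm
end

section
/- Let A be a commutative ring, E an A-module, and I an ideal of A. The ideal I ⋉ IE of the trivial extension R = A ⋉ E is finitely generated as an ideal of R if and only if I is finitely generated as an ideal of A. -/
/-!
`I ⋉ IE` is the extension `I R` of `I` along `inl : A → A ⋉ E`, and the retraction `fst` maps it
back onto `I`; finite generation passes along ring homomorphisms in both directions.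
-/

open TrivSqZeroExt

namespace TrivSqZeroExt

variable {A E : Type*} [CommSemiring A] [AddCommMonoid E] [Module A E] [Module Aᵐᵒᵖ E]
  [IsCentralScalar A E]

theorem inr_mem_map_inlHom {I : Ideal A} {m : E} (hm : m ∈ I • (⊤ : Submodule A E)) :
    inr m ∈ I.map (inlHom A E) := by
  refine Submodule.smul_induction_on hm (fun a ha m _ => ?_) fun m n hm hn => ?_
  · rw [← inl_mul_inr]
    exact Ideal.mul_mem_right _ _ (Ideal.mem_map_of_mem _ ha)
  · rw [inr_add]
    exact add_mem hm hn

theorem mem_map_inlHom_iff {I : Ideal A} {x : TrivSqZeroExt A E} :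
    x ∈ I.map (inlHom A E) ↔ x.fst ∈ I ∧ x.snd ∈ I • (⊤ : Submodule A E) := by
  constructor
  · intro hx
    induction hx using Submodule.span_induction with
    | mem x hx =>
      obtain ⟨a, ha, rfl⟩ := hx
      exact ⟨ha, Submodule.zero_mem _⟩
    | zero => exact ⟨I.zero_mem, Submodule.zero_mem _⟩
    | add x y _ _ hx hy => exact ⟨I.add_mem hx.1 hy.1, Submodule.add_mem _ hx.2 hy.2⟩
    | smul r x _ hx =>
      refine ⟨I.mul_mem_left _ hx.1, Submodule.add_mem _ (Submodule.smul_mem _ _ hx.2) ?_⟩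
      rw [op_smul_eq_smul]
      exact Submodule.smul_mem_smul hx.1 Submodule.mem_top
  · rintro ⟨hfst, hsnd⟩
    rw [← inl_fst_add_inr_snd_eq x]
    exact add_mem (Ideal.mem_map_of_mem _ hfst) (inr_mem_map_inlHom hsnd)

theorem map_fstHom_map_inlHom (I : Ideal A) :
    (I.map (inlHom A E)).map (fstHom A A E).toRingHom = I := by
  rw [Ideal.map_map]
  convert Ideal.map_id I
  ext a
  exact fst_inl E a

end TrivSqZeroExt

/-- The ideal `I ⋉ IE` of `R = A ⋉ E` is finitely generated iff `I` is finitely generated. -/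
theorem fg_ideal_trivSqZeroExt (A : Type*) [CommRing A] (E : Type*) [AddCommGroup E]
    [Module A E] [Module Aᵐᵒᵖ E] [IsCentralScalar A E] (I : Ideal A)
    (J : Ideal (TrivSqZeroExt A E))
    (hJ : ∀ x : TrivSqZeroExt A E,
      x ∈ J ↔ x.fst ∈ I ∧ x.snd ∈ I • (⊤ : Submodule A E)) :
    J.FG ↔ I.FG := by
  obtain rfl : J = I.map (inlHom A E) := Ideal.ext fun x => by rw [hJ, mem_map_inlHom_iff]
  refine ⟨fun hFG => ?_, fun hFG => hFG.map _⟩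
  rw [← map_fstHom_map_inlHom (E := E) I]
  exact hFG.map _
end

section
/- Let A be an integral domain which is not a field, K its field of fractions, and R = A ⋉ K the trivial extension. Then an element (a, e) of R is a regular element (non-zerodivisor) if and only if a ≠ 0. -/
/-- Let `A` be a domain which is not a field and `K` its fraction field. An element
`(a, e)` of `R = A ⋉ K` is regular (a non-zerodivisor) iff `a ≠ 0`. -/
theorem trivSqZeroExt_regular_iff (A : Type*) [CommRing A] [IsDomain A] (hA : ¬IsField A)
    (K : Type*) [Field K] [Algebra A K] [IsFractionRing A K]
    [Module Aᵐᵒᵖ K] [IsCentralScalar A K]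
    (x : TrivSqZeroExt A K) :
    x ∈ nonZeroDivisors (TrivSqZeroExt A K) ↔ x.fst ≠ 0 := by
  constructor
  · intro hx ha
    have h1 : (TrivSqZeroExt.inr 1 : TrivSqZeroExt A K) * x = 0 := by
      apply TrivSqZeroExt.ext <;>
        simp [TrivSqZeroExt.fst_mul, TrivSqZeroExt.snd_mul, ha, op_smul_eq_smul]
    have h2 := mem_nonZeroDivisors_iff_right.mp hx _ h1
    have : (1 : K) = 0 := by
      simpa using congrArg TrivSqZeroExt.snd h2
    exact one_ne_zero this
  · intro ha; rw [mem_nonZeroDivisors_iff_right]; intro z hz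
    have hf : z.fst * x.fst = 0 := by
      simpa using congrArg TrivSqZeroExt.fst hz
    have hzf : z.fst = 0 := by
      rcases mul_eq_zero.mp hf with h | h
      · exact h
      · exact absurd h ha
    have hs : z.fst • x.snd + x.fst • z.snd = 0 := by
      have := congrArg TrivSqZeroExt.snd hz
      simpa [TrivSqZeroExt.snd_mul, op_smul_eq_smul] using this
    rw [hzf, zero_smul, zero_add] at hs
    have hzs : z.snd = 0 := by
      rw [Algebra.smul_def] at hs
      rcases mul_eq_zero.mp hs with h | h
      · exact absurd ((map_eq_zero_iff _ (IsFractionRing.injective A K)).mp h) ha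
      · exact h
    exact TrivSqZeroExt.ext hzf hzs
end

section
/- Let A be an integral domain which is not a field, K its field of fractions, and R = A ⋉ K. Then the annihilator of the element (0,1) in R is the ideal 0 ⋉ K, and this ideal is not finitely generated; consequently R is not a coherent ring. -/
/-!
Multiplication by `(0,1)` sends `x` to `(0, x.fst)`, so its annihilator is `0 ⋉ K`. Because this
ideal squares to zero, `R` acts on it through `A`, and a finite set of generators of it as an ideal
spans `K` as an `A`-module. But `K` is not a finite `A`-module: it would be integral over `A`,
forcing `A` to be a field. In a coherent ring the annihilator of an element is finitely generated,
being the kernel of `R → R x` onto the finitely presented ideal `R x`.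
-/

/-- A ring is coherent if every finitely generated ideal is finitely presented. -/
def IsCoherentRing (R : Type*) [CommRing R] : Prop :=
  ∀ I : Ideal R, I.FG → Module.FinitePresentation R I

namespace TrivSqZeroExt

variable {R M : Type*} [CommSemiring R] [AddCommMonoid M] [Module R M] [Module Rᵐᵒᵖ M]

theorem mul_inr (x : TrivSqZeroExt R M) (m : M) : x * inr m = inr (x.fst • m) := by
  ext <;> simp

theorem mul_inr_eq_zero_iff (x : TrivSqZeroExt R M) (m : M) : x * inr m = 0 ↔ x.fst • m = 0 := by
  rw [mul_inr, ← inr_zero, inr_injective.eq_iff]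

variable [IsCentralScalar R M]

theorem snd_mem_span_of_mem_span {s : Set (TrivSqZeroExt R M)} (hs : s ⊆ kerIdeal R M)
    {x : TrivSqZeroExt R M} (hx : x ∈ Ideal.span s) : x.snd ∈ Submodule.span R (snd '' s) := by
  induction hx using Submodule.span_induction with
  | mem x hx => exact Submodule.subset_span ⟨x, hx, rfl⟩
  | zero => exact zero_mem _
  | add x y _ _ hx hy => exact add_mem hx hy
  | smul r x hx hsnd =>
    have hx_inr : x = inr x.snd := (mem_kerIdeal_iff_inr R M x).mp (Ideal.span_le.mpr hs hx)
    rw [smul_eq_mul, hx_inr, mul_inr, snd_inr]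
    exact Submodule.smul_mem _ _ hsnd

theorem finite_of_kerIdeal_fg (h : (kerIdeal R M).FG) : Module.Finite R M := by
  obtain ⟨s, hs⟩ := h
  refine Module.finite_def.mpr <| Submodule.fg_def.mpr
    ⟨snd '' (s : Set (TrivSqZeroExt R M)), s.finite_toSet.image _, eq_top_iff.mpr fun m _ => ?_⟩
  have hm : inr m ∈ Ideal.span (s : Set (TrivSqZeroExt R M)) := by
    rw [hs, mem_kerIdeal_iff_inr, snd_inr]
  exact snd_mem_span_of_mem_span (hs ▸ Ideal.subset_span) hm

end TrivSqZeroExt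

theorem IsFractionRing.isField_of_finite (A K : Type*) [CommRing A] [Field K] [Algebra A K]
    [IsFractionRing A K] [Module.Finite A K] : IsField A :=
  have : Algebra.IsIntegral A K := Algebra.IsIntegral.of_finite A K
  isField_of_isIntegral_of_isField (IsFractionRing.injective A K) (Field.toIsField K)

theorem IsCoherentRing.ker_toSpanSingleton_fg {R : Type*} [CommRing R] (hR : IsCoherentRing R)
    (x : R) : (LinearMap.toSpanSingleton R R x).ker.FG := by
  set f := LinearMap.toSpanSingleton R R x
  have : Module.FinitePresentation R (LinearMap.range f) :=
    hR _ (LinearMap.span_singleton_eq_range R R x ▸ Submodule.fg_span_singleton x)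
  simpa only [LinearMap.ker_rangeRestrict] using
    Module.FinitePresentation.fg_ker f.rangeRestrict f.surjective_rangeRestrict

open TrivSqZeroExt in
theorem trivSqZeroExt_not_coherent_general (A : Type*) [CommRing A] (hA : ¬IsField A)
    (K : Type*) [Field K] [Algebra A K] [IsFractionRing A K]
    [Module Aᵐᵒᵖ K] [IsCentralScalar A K]
    (J : Ideal (TrivSqZeroExt A K))
    (hJ : ∀ x : TrivSqZeroExt A K, x ∈ J ↔ x * TrivSqZeroExt.inr (1 : K) = 0) :
    (∀ x : TrivSqZeroExt A K, x ∈ J ↔ x.fst = 0) ∧ ¬ J.FG ∧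
      ¬ IsCoherentRing (TrivSqZeroExt A K) := by
  have hJ_fst (x : TrivSqZeroExt A K) : x ∈ J ↔ x.fst = 0 := by
    rw [hJ, mul_inr_eq_zero_iff, Algebra.smul_def, mul_one,
      map_eq_zero_iff _ (IsFractionRing.injective A K)]
  have hJ_ker : J = kerIdeal A K := by
    ext x
    rw [hJ_fst]
    rfl
  have hJ_not_fg : ¬ J.FG := fun hfg =>
    have : Module.Finite A K := finite_of_kerIdeal_fg (hJ_ker ▸ hfg)
    hA (IsFractionRing.isField_of_finite A K)
  have hJ_ann : J = (LinearMap.toSpanSingleton _ _ (inr 1 : TrivSqZeroExt A K)).ker := by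
    ext x
    simp [hJ]
  exact ⟨hJ_fst, hJ_not_fg, fun hcoh => hJ_not_fg (hJ_ann ▸ hcoh.ker_toSpanSingleton_fg _)⟩

/-- For a domain `A` that is not a field with fraction field `K`, the annihilator of
`(0,1)` in `R = A ⋉ K` is `0 ⋉ K`, it is not finitely generated, and `R` is not coherent. -/
theorem trivSqZeroExt_not_coherent (A : Type*) [CommRing A] [IsDomain A] (hA : ¬IsField A)
    (K : Type*) [Field K] [Algebra A K] [IsFractionRing A K]
    [Module Aᵐᵒᵖ K] [IsCentralScalar A K]
    (J : Ideal (TrivSqZeroExt A K))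
    (hJ : ∀ x : TrivSqZeroExt A K, x ∈ J ↔ x * TrivSqZeroExt.inr (1 : K) = 0) :
    (∀ x : TrivSqZeroExt A K, x ∈ J ↔ x.fst = 0) ∧ ¬ J.FG ∧
      ¬ IsCoherentRing (TrivSqZeroExt A K) :=
  trivSqZeroExt_not_coherent_general A hA K J hJ
end

section
/- Let A be an integral domain which is not a field, with fraction field K, and R = A ⋉ K. If A is a Bézout domain, then R is a Bézout ring, i.e., every finitely generated ideal of R is principal. -/
/-! Write `x = (a, e)`. If `a ≠ 0` then `inr k = inr (k / a) * x`, so every ideal containing `x`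
contains `0 ⋉ K` and with it every `w` with `a ∣ w.fst`. Hence if `g ≠ 0` generates the ideal
`(x.fst, y.fst)` of `A`, the ideals `(x, y)` and `(inl g)` coincide. If `g = 0`, then `x = inr e`,
`y = inr f` and `(x, y) = (inr c)` where `c` generates the `A`-submodule `A e + A f` of `K`, which
is principal because clearing denominators turns it into the image of an ideal of `A`. -/

open TrivSqZeroExt

theorem IsLocalization.isPrincipal_span_pair {A : Type*} (K : Type*) [CommRing A] [IsBezout A]
    [CommRing K] [Algebra A K] (S : Submonoid A) [IsLocalization S K] (e f : K) :
    (Submodule.span A {e, f}).IsPrincipal := by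
  obtain ⟨⟨a, s⟩, hs⟩ := surj S e
  obtain ⟨⟨b, t⟩, ht⟩ := surj S f
  have he : e = mk' K (a * t) (s * t) := by
    rw [eq_mk'_iff_mul_eq, Submonoid.coe_mul, map_mul, map_mul, ← hs]; ring
  have hf : f = mk' K (b * s) (s * t) := by
    rw [eq_mk'_iff_mul_eq, Submonoid.coe_mul, map_mul, map_mul, ← ht]; ring
  have hspan : Submodule.span A {e, f} =
      (Submodule.span A {a * t, b * s}).map (LinearMap.toSpanSingleton A K (mk' K 1 (s * t))) := by
    rw [Submodule.map_span, Set.image_pair, LinearMap.toSpanSingleton_apply,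
      LinearMap.toSpanSingleton_apply, smul_mk'_one, smul_mk'_one, he, hf]
  rw [hspan]
  exact (IsBezout.span_pair_isPrincipal _ _).map _

namespace TrivSqZeroExt

theorem span_pair_inr_eq_span_inr {R M : Type*} [Semiring R] [AddCommMonoid M] [Module R M]
    [Module Rᵐᵒᵖ M] [SMulCommClass R Rᵐᵒᵖ M] {e f c : M}
    (h : Submodule.span R {e, f} = R ∙ c) :
    Ideal.span {inr e, inr f} = Ideal.span {(inr c : TrivSqZeroExt R M)} := by
  apply le_antisymm <;> rw [Ideal.span_le]
  · have hmem : ∀ m ∈ R ∙ c, (inr m : TrivSqZeroExt R M) ∈ Ideal.span {inr c} := by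
      intro m hm
      obtain ⟨r, rfl⟩ := Submodule.mem_span_singleton.mp hm
      rw [← inl_mul_inr]
      exact Ideal.mul_mem_left _ _ (Ideal.mem_span_singleton_self _)
    rintro _ (rfl | rfl) <;> exact hmem _ (h ▸ Submodule.subset_span (by simp))
  · obtain ⟨u, v, huv⟩ :=
      Submodule.mem_span_pair.mp (h ▸ Submodule.mem_span_singleton_self c)
    rw [Set.singleton_subset_iff, ← huv, inr_add, ← inl_mul_inr, ← inl_mul_inr]
    exact Ideal.mem_span_pair.mpr ⟨_, _, rfl⟩

section Field

variable {A K : Type*} [CommSemiring A] [Field K] [Algebra A K] [Module Aᵐᵒᵖ K]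
  [IsCentralScalar A K] {I : Ideal (TrivSqZeroExt A K)}

theorem inr_mem_of_algebraMap_fst_ne_zero {z : TrivSqZeroExt A K} (hz : z ∈ I)
    (h : algebraMap A K z.fst ≠ 0) (k : K) : inr k ∈ I := by
  have hk : inr k = inr (k / algebraMap A K z.fst) * z := by
    ext <;> simp [Algebra.smul_def, mul_div_cancel₀ _ h]
  rw [hk]
  exact I.mul_mem_left _ hz

theorem mem_of_fst_dvd {z w : TrivSqZeroExt A K} (hz : z ∈ I)
    (h : algebraMap A K z.fst ≠ 0) (hdvd : z.fst ∣ w.fst) : w ∈ I := by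
  obtain ⟨c, hc⟩ := hdvd
  have hw : w = inl c * z + inr (w.snd - (inl c * z).snd) := by
    ext <;> simp [hc, mul_comm]
  rw [hw]
  exact I.add_mem (I.mul_mem_left _ hz) (inr_mem_of_algebraMap_fst_ne_zero hz h _)

theorem span_pair_eq_span_inl {x y : TrivSqZeroExt A K} {g : A}
    (hg : Ideal.span {x.fst, y.fst} = Ideal.span {g}) (hg0 : algebraMap A K g ≠ 0) :
    Ideal.span {x, y} = Ideal.span {inl g} := by
  apply le_antisymm <;> rw [Ideal.span_le]
  · have hdvd : ∀ a ∈ Ideal.span {x.fst, y.fst}, g ∣ a := fun a ha =>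
      Ideal.mem_span_singleton.mp (hg ▸ ha)
    have hmem : inl g ∈ Ideal.span {(inl g : TrivSqZeroExt A K)} :=
      Ideal.mem_span_singleton_self _
    rintro _ (rfl | rfl) <;> exact mem_of_fst_dvd hmem hg0 (hdvd _ (Ideal.subset_span (by simp)))
  · obtain ⟨u, v, huv⟩ := Ideal.mem_span_pair.mp (hg ▸ Ideal.mem_span_singleton_self g)
    have hz : inl u * x + inl v * y ∈ Ideal.span {x, y} := Ideal.mem_span_pair.mpr ⟨_, _, rfl⟩
    have hzfst : (inl u * x + inl v * y).fst = g := by simpa using huv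
    rw [Set.singleton_subset_iff]
    exact mem_of_fst_dvd hz (hzfst ▸ hg0) (by rw [hzfst, fst_inl])

end Field

end TrivSqZeroExt

theorem trivSqZeroExt_isBezout_general (A : Type*) [CommRing A]
    (K : Type*) [Field K] [Algebra A K] [IsFractionRing A K]
    [Module Aᵐᵒᵖ K] [IsCentralScalar A K]
    (hB : IsBezout A) :
    IsBezout (TrivSqZeroExt A K) := by
  rw [IsBezout.iff_span_pair_isPrincipal]
  intro x y
  obtain ⟨g, hg⟩ := (IsBezout.span_pair_isPrincipal x.fst y.fst).principal
  by_cases hg0 : g = 0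
  · have hfst : x.fst = 0 ∧ y.fst = 0 := by
      simpa [hg0, Ideal.span_eq_bot] using hg
    obtain ⟨c, hc⟩ :=
      (IsLocalization.isPrincipal_span_pair K (nonZeroDivisors A) x.snd y.snd).principal
    rw [← inl_fst_add_inr_snd_eq x, ← inl_fst_add_inr_snd_eq y, hfst.1, hfst.2, inl_zero,
      zero_add, zero_add]
    exact ⟨inr c, span_pair_inr_eq_span_inr hc⟩
  · exact ⟨inl g, span_pair_eq_span_inl hg
      ((map_ne_zero_iff _ (IsFractionRing.injective A K)).mpr hg0)⟩

/-- If `A` is a Bézout domain (not a field) with fraction field `K`, then the trivial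
extension `R = A ⋉ K` is a Bézout ring. -/
theorem trivSqZeroExt_isBezout (A : Type*) [CommRing A] [IsDomain A] (hA : ¬IsField A)
    (K : Type*) [Field K] [Algebra A K] [IsFractionRing A K]
    [Module Aᵐᵒᵖ K] [IsCentralScalar A K]
    (hB : IsBezout A) :
    IsBezout (TrivSqZeroExt A K) :=
  trivSqZeroExt_isBezout_general A K hB
end

section
/- Let (A, M) be a local ring with M² = 0. If M is finitely generated as an ideal, then A is a coherent ring, i.e., every finitely generated ideal of A is finitely presented. -/
/-- If `(A, M)` is local with `M² = 0` and `M` finitely generated, then `A` is coherent. -/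
theorem coherent_of_fg_maximalIdeal_sq_zero (A : Type*) [CommRing A] [IsLocalRing A]
    (hM2 : IsLocalRing.maximalIdeal A * IsLocalRing.maximalIdeal A = ⊥)
    (hfg : (IsLocalRing.maximalIdeal A).FG) :
    IsCoherentRing A := by
  set M := IsLocalRing.maximalIdeal A with hMdef
  have htor : Module.IsTorsionBySet A ↥M (M : Set A) := by
    rintro x ⟨a, ha⟩
    have : a * (x : A) ∈ M * M := Ideal.mul_mem_mul ha x.2
    rw [hM2] at this
    ext
    simpa using this
  letI : Module (A ⧸ M) ↥M := htor.module
  haveI : IsScalarTower A (A ⧸ M) ↥M := htor.isScalarTower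
  haveI : Module.Finite A ↥M := Module.Finite.iff_fg.mpr hfg
  haveI : Module.Finite (A ⧸ M) ↥M :=
    Module.Finite.of_restrictScalars_finite A (A ⧸ M) ↥M
  letI : Field (A ⧸ M) := Ideal.Quotient.field M
  haveI hNM : IsNoetherian (A ⧸ M) ↥M := IsNoetherian.iff_fg.mpr inferInstance
  haveI : IsNoetherianRing A := by
    rw [isNoetherianRing_iff, isNoetherian_def]
    intro I
    by_cases hI : I = ⊤
    · exact ⟨{1}, by simp [hI, Ideal.span_singleton_one]⟩
    · have hIM : I ≤ M := IsLocalRing.le_maximalIdeal hI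
      let N' : Submodule (A ⧸ M) ↥M :=
        { carrier := {x : ↥M | (x : A) ∈ I}
          add_mem' := fun hx hy => I.add_mem hx hy
          zero_mem' := I.zero_mem
          smul_mem' := by
            intro c x hx
            obtain ⟨a, rfl⟩ := Ideal.Quotient.mk_surjective c
            have : (Ideal.Quotient.mk M a) • x = a • x := htor.mk_smul a x
            rw [this]
            exact Ideal.mul_mem_left I a hx }
      have hN' : N'.FG := IsNoetherian.noetherian N'
      have hN : (N'.restrictScalars A).FG :=
        Submodule.FG.restrictScalars_of_surjective hN' Ideal.Quotient.mk_surjective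
      have heq : Submodule.map M.subtype (N'.restrictScalars A) = I := by
        apply le_antisymm
        · rintro _ ⟨x, hx, rfl⟩
          exact hx
        · intro x hx
          exact ⟨⟨x, hIM hx⟩, hx, rfl⟩
      have := hN.map M.subtype
      rwa [heq] at this
  intro I hI
  haveI : Module.Finite A ↥I := Module.Finite.iff_fg.mpr hI
  exact Module.finitePresentation_of_finite A ↥I
end

section
/- Let (A, M) be a local ring with M² = 0 that is not a field. Then A is not a G-GCD ring; specifically, for any nonzero c ∈ M, the principal ideal Ac is not a projective A-module. -/
/-- A G-GCD ring: every principal ideal is projective, and the intersection of any two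
finitely generated flat ideals is a finitely generated flat ideal. -/
def IsGGCDRing (R : Type*) [CommRing R] : Prop :=
  (∀ a : R, Module.Projective R (Ideal.span {a})) ∧
    ∀ I J : Ideal R, I.FG → Module.Flat R I → J.FG → Module.Flat R J →
      (I ⊓ J).FG ∧ Module.Flat R ↥(I ⊓ J)

/-- If `(A, M)` is local with `M² = 0` and `A` is not a field, then `A` is not a G-GCD
ring; specifically, for every nonzero `c ∈ M` the principal ideal `Ac` is not projective. -/
theorem not_GGCD_of_maximalIdeal_sq_zero (A : Type*) [CommRing A] [IsLocalRing A]
    (hM2 : IsLocalRing.maximalIdeal A * IsLocalRing.maximalIdeal A = ⊥)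
    (hA : ¬IsField A) :
    ¬ IsGGCDRing A ∧
      ∀ c ∈ IsLocalRing.maximalIdeal A, c ≠ 0 →
        ¬ Module.Projective A (Ideal.span {c}) := by
  have hMne : IsLocalRing.maximalIdeal A ≠ ⊥ := by
    intro h
    exact hA (IsLocalRing.isField_iff_maximalIdeal_eq.mpr h)
  -- M² = 0, so products of two elements of M vanish
  have hmul : ∀ x ∈ IsLocalRing.maximalIdeal A, ∀ y ∈ IsLocalRing.maximalIdeal A,
      x * y = 0 := by
    intro x hx y hy
    have : x * y ∈ IsLocalRing.maximalIdeal A * IsLocalRing.maximalIdeal A :=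
      Ideal.mul_mem_mul hx hy
    rwa [hM2, Ideal.mem_bot] at this
  have key : ∀ c ∈ IsLocalRing.maximalIdeal A, c ≠ 0 →
      ¬ Module.Projective A (Ideal.span {c}) := by
    intro c hc hc0 hproj
    set I : Ideal A := Ideal.span {c} with hI
    have hcI : c ∈ I := Ideal.subset_span rfl
    -- the surjection A → I, a ↦ a * c
    let f : A →ₗ[A] I :=
      (LinearMap.toSpanSingleton A A c).codRestrict (I.restrictScalars A)
        (fun a => by
          simp only [LinearMap.toSpanSingleton_apply, smul_eq_mul]
          exact Ideal.mem_span_singleton.mpr (Dvd.intro_left a rfl))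
    have hf : Function.Surjective f := by
      rintro ⟨x, hx⟩
      obtain ⟨a, rfl⟩ := Ideal.mem_span_singleton.mp hx
      exact ⟨a, Subtype.ext (show a • c = c * a by rw [smul_eq_mul, mul_comm])⟩
    obtain ⟨s, hs⟩ := Module.projective_lifting_property f LinearMap.id hf
    set a : A := s ⟨c, hcI⟩ with ha
    have hac : a * c = c := by
      have := congrArg Subtype.val (LinearMap.congr_fun hs ⟨c, hcI⟩)
      rw [← smul_eq_mul]; exact this
    -- a is a unit: otherwise c = a*c ∈ M² = 0
    have haM : a ∉ IsLocalRing.maximalIdeal A := by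
      intro haM
      exact hc0 (hac ▸ hmul a haM c hc)
    have hau : IsUnit a := by
      by_contra h
      exact haM (IsLocalRing.mem_maximalIdeal a |>.mpr h)
    -- every m ∈ M kills a
    have hma : ∀ m ∈ IsLocalRing.maximalIdeal A, m * a = 0 := by
      intro m hm
      have h1 : m • (⟨c, hcI⟩ : I) = 0 := by
        apply Subtype.ext
        simpa using hmul m hm c hc
      calc m * a = m • a := by rw [smul_eq_mul]
        _ = s (m • ⟨c, hcI⟩) := (s.map_smul m _).symm
        _ = s 0 := by rw [h1]
        _ = 0 := s.map_zero
    -- hence M = 0, contradiction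
    apply hMne
    ext m
    simp only [Ideal.mem_bot]
    constructor
    · intro hm
      obtain ⟨u, hu⟩ := hau
      have := hma m hm
      calc m = m * a * (↑u⁻¹ : Aˣ) := by
            rw [← hu, mul_assoc, Units.mul_inv, mul_one]
        _ = 0 := by rw [this, zero_mul]
    · rintro rfl; exact zero_mem _
  refine ⟨fun hG => ?_, key⟩
  obtain ⟨c, hc, hc0⟩ := Submodule.exists_mem_ne_zero_of_ne_bot hMne
  exact key c hc hc0 (hG.1 c)
end

section
/- Let (A, M) be a local ring and E an A-module with ME = 0. If A is a coherent ring, M is finitely generated, and E is a finite-dimensional (A/M)-vector space, then the trivial extension R = A ⋉ E is a coherent ring. -/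
open Module LinearMap

/-- transfer finite presentation along a linear equivalence -/
lemma fpEquiv {R M N : Type*} [CommRing R] [AddCommGroup M] [Module R M]
    [AddCommGroup N] [Module R N] [Module.FinitePresentation R M] (e : M ≃ₗ[R] N) :
    Module.FinitePresentation R N :=
  Module.finitePresentation_of_surjective e.toLinearMap e.surjective
    (by rw [LinearEquiv.ker]; exact Submodule.fg_bot)

lemma fpPi {R M : Type*} [CommRing R] [AddCommGroup M] [Module R M]
    [h : Module.FinitePresentation R M] (ι : Type*) [Fintype ι] :
    Module.FinitePresentation R (ι → M) := by
  classical
  obtain ⟨s, hs, hker⟩ := h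
  set π := Finsupp.linearCombination R ((↑) : s → M) with hπ
  have hsurj : Function.Surjective π := LinearMap.range_eq_top.mp
    (by rw [hπ, Finsupp.range_linearCombination, Subtype.range_val, ← hs])
  let P : (ι → (s →₀ R)) →ₗ[R] (ι → M) := LinearMap.pi (fun i => π ∘ₗ LinearMap.proj i)
  have hP : Function.Surjective P := by
    intro f
    choose g hg using fun i => hsurj (f i)
    exact ⟨g, funext fun i => hg i⟩
  have hkerP : LinearMap.ker P = Submodule.pi Set.univ (fun _ => LinearMap.ker π) := by
    ext x
    simp [P, Submodule.mem_pi, funext_iff]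
  exact Module.finitePresentation_of_free_of_surjective P hP
    (by rw [hkerP]; exact Submodule.fg_pi fun _ => hker)

lemma fgOfRestrict {A R M : Type*} [CommRing A] [CommRing R] [Algebra A R]
    [AddCommGroup M] [Module R M] [Module A M] [IsScalarTower A R M]
    {p : Submodule R M} (h : (p.restrictScalars A).FG) : p.FG := by
  obtain ⟨t, ht⟩ := h
  refine ⟨t, le_antisymm (Submodule.span_le.mpr ?_) ?_⟩
  · intro x hx
    have : x ∈ p.restrictScalars A := ht ▸ Submodule.subset_span hx
    exact this
  · intro x hx
    have hx' : x ∈ Submodule.span A (t : Set M) := by rw [ht]; exact hx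
    exact Submodule.span_le_restrictScalars A R (t : Set M) hx'

/-- If `R` is an `A`-algebra, finitely presented as an `A`-module, and `M` is an `R`-module
which is finite over `R` and finitely presented over `A`, then `M` is finitely presented
over `R`. -/
lemma fpAscend {A R M : Type*} [CommRing A] [CommRing R] [Algebra A R] [AddCommGroup M]
    [Module R M] [Module A M] [IsScalarTower A R M] [Module.FinitePresentation A R]
    [hM : Module.Finite R M] [Module.FinitePresentation A M] :
    Module.FinitePresentation R M := by
  classical
  obtain ⟨s, hs⟩ := hM.fg_top
  set π := Finsupp.linearCombination R ((↑) : s → M) with hπ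
  have hsurj : Function.Surjective π := LinearMap.range_eq_top.mp
    (by rw [hπ, Finsupp.range_linearCombination, Subtype.range_val, ← hs])
  haveI : Module.FinitePresentation A (↑s → R) := fpPi ↑s
  haveI : Module.FinitePresentation A (↑s →₀ R) :=
    fpEquiv ((Finsupp.linearEquivFunOnFinite R R ↑s).restrictScalars A).symm
  refine ⟨s, hs, ?_⟩
  apply fgOfRestrict (A := A)
  rw [← LinearMap.ker_restrictScalars]
  exact Module.FinitePresentation.fg_ker (π.restrictScalars A) hsurj

lemma fpOfFinK {A k V : Type*} [CommRing A] [Field k] [Algebra A k]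
    [Module.FinitePresentation A k] [AddCommGroup V] [Module A V] [Module k V]
    [IsScalarTower A k V] [Module.Finite k V] : Module.FinitePresentation A V := by
  have e : V ≃ₗ[k] (Fin (Module.finrank k V) → k) := (Module.finBasis k V).equivFun
  haveI : Module.FinitePresentation A (Fin (Module.finrank k V) → k) := fpPi _
  exact fpEquiv (e.restrictScalars A).symm

set_option synthInstance.maxHeartbeats 1000000 in
set_option maxHeartbeats 2000000 in
/-- If `(A, M)` is local and coherent, `ME = 0`, `M` is finitely generated, and `E` is a
finite-dimensional vector space over the residue field `A/M`, then `R = A ⋉ E` is coherent. -/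
theorem trivSqZeroExt_coherent (A : Type*) [CommRing A] [IsLocalRing A]
    (E : Type*) [AddCommGroup E] [Module A E] [Module Aᵐᵒᵖ E] [IsCentralScalar A E]
    [Module (IsLocalRing.ResidueField A) E] [IsScalarTower A (IsLocalRing.ResidueField A) E]
    (hME : ∀ m ∈ IsLocalRing.maximalIdeal A, ∀ e : E, m • e = 0)
    (hA : IsCoherentRing A) (hM : (IsLocalRing.maximalIdeal A).FG)
    (hE : Module.Finite (IsLocalRing.ResidueField A) E) :
    IsCoherentRing (TrivSqZeroExt A E) := by
  classical
  intro I hI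
  haveI := hE
  set k := IsLocalRing.ResidueField A with hk
  -- `k` is finitely presented over `A`
  haveI fpk : Module.FinitePresentation A k := by
    apply Module.finitePresentation_of_surjective (Algebra.linearMap A k)
    · intro x
      obtain ⟨y, hy⟩ := IsLocalRing.residue_surjective (R := A) x
      exact ⟨y, by rw [Algebra.linearMap_apply, IsLocalRing.ResidueField.algebraMap_eq]; exact hy⟩
    · have hker : LinearMap.ker (Algebra.linearMap A k) = IsLocalRing.maximalIdeal A := by
        ext x
        rw [LinearMap.mem_ker, Algebra.linearMap_apply, IsLocalRing.ResidueField.algebraMap_eq]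
        exact Ideal.Quotient.eq_zero_iff_mem
      rw [hker]; exact hM
  haveI fpE : Module.FinitePresentation A E := fpOfFinK (k := k)
  -- the linear equivalence between `TrivSqZeroExt A E` and `A × E`
  let eqv : TrivSqZeroExt A E ≃ₗ[A] A × E :=
    { toFun := fun x => (x.fst, x.snd)
      invFun := fun p => TrivSqZeroExt.inl p.1 + TrivSqZeroExt.inr p.2
      map_add' := fun x y => by simp
      map_smul' := fun a x => by simp
      left_inv := fun x => TrivSqZeroExt.inl_fst_add_inr_snd_eq x
      right_inv := fun p => by simp }
  -- `A × E` and hence `TrivSqZeroExt A E` are finitely presented over `A`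
  haveI : Module.FinitePresentation A ↥(LinearMap.ker (LinearMap.snd A A E)) := by
    rw [LinearMap.ker_snd]
    exact fpEquiv (LinearEquiv.ofInjective (LinearMap.inl A A E) LinearMap.inl_injective)
  haveI fpAE : Module.FinitePresentation A (A × E) :=
    Module.finitePresentation_of_ker (LinearMap.snd A A E) Prod.snd_surjective
  haveI fpR : Module.FinitePresentation A (TrivSqZeroExt A E) := fpEquiv eqv.symm
  -- finiteness of `I` over `A`
  haveI : Module.Finite (TrivSqZeroExt A E) I := Module.Finite.iff_fg.mpr hI
  haveI finAI : Module.Finite A I := Module.Finite.trans (TrivSqZeroExt A E) I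
  set I' : Submodule A (TrivSqZeroExt A E) := I.restrictScalars A with hI'
  haveI finAI' : Module.Finite A I' :=
    Module.Finite.equiv ((Submodule.restrictScalarsEquiv A (TrivSqZeroExt A E)
      (TrivSqZeroExt A E) I).restrictScalars A).symm
  -- the projections as `A`-linear maps
  let fstA : TrivSqZeroExt A E →ₗ[A] A := (LinearMap.fst A A E) ∘ₗ eqv.toLinearMap
  let sndA : TrivSqZeroExt A E →ₗ[A] E := (LinearMap.snd A A E) ∘ₗ eqv.toLinearMap
  let inrA : E →ₗ[A] TrivSqZeroExt A E := eqv.symm.toLinearMap ∘ₗ LinearMap.inr A A E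
  have key : ∀ x : TrivSqZeroExt A E, fstA x = 0 → inrA (sndA x) = x := by
    intro x hx
    have h1 : ((0 : A), sndA x) = eqv x := by
      refine Prod.ext hx.symm rfl
    show eqv.symm (0, sndA x) = x
    rw [h1, LinearEquiv.symm_apply_apply]
  let l : ↥I' →ₗ[A] A := fstA ∘ₗ I'.subtype
  -- the image ideal
  have hJfg : (LinearMap.range l).FG := by
    have h := (finAI'.fg_top).map l
    rwa [Submodule.map_top] at h
  haveI fpJ : Module.FinitePresentation A ↥(LinearMap.range l) := hA (LinearMap.range l) hJfg
  -- the kernel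
  set W : Submodule A E := I'.comap inrA with hW
  let φ : ↥(LinearMap.ker l) →ₗ[A] ↥W :=
    LinearMap.codRestrict W ((sndA ∘ₗ I'.subtype) ∘ₗ (LinearMap.ker l).subtype)
      (fun c => by
        show inrA (sndA (c.1 : TrivSqZeroExt A E)) ∈ I'
        rw [key _ c.2]
        exact c.1.2)
  have hφ : Function.Bijective φ := by
    constructor
    · intro a b hab
      have h1 : sndA (a.1 : TrivSqZeroExt A E) = sndA (b.1 : TrivSqZeroExt A E) :=
        congrArg Subtype.val hab
      have ha0 : fstA (a.1 : TrivSqZeroExt A E) = 0 := LinearMap.mem_ker.mp a.2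
      have hb0 : fstA (b.1 : TrivSqZeroExt A E) = 0 := LinearMap.mem_ker.mp b.2
      have h2 : (a.1 : TrivSqZeroExt A E) = (b.1 : TrivSqZeroExt A E) := by
        rw [← key _ ha0, ← key _ hb0, h1]
      exact Subtype.ext (Subtype.ext h2)
    · rintro ⟨e, he⟩
      have hmem : (⟨inrA e, he⟩ : ↥I') ∈ LinearMap.ker l := by
        show fstA (inrA e) = 0
        show (eqv (eqv.symm (0, e))).1 = 0
        rw [LinearEquiv.apply_symm_apply]
      refine ⟨⟨⟨inrA e, he⟩, hmem⟩, Subtype.ext ?_⟩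
      show sndA (inrA e) = e
      show (eqv (eqv.symm (0, e))).2 = e
      rw [LinearEquiv.apply_symm_apply]
  -- `W` is a `k`-submodule
  let W' : Submodule k E :=
    { carrier := W
      add_mem' := fun ha hb => W.add_mem ha hb
      zero_mem' := W.zero_mem
      smul_mem' := fun c x hx => by
        obtain ⟨a, rfl⟩ := IsLocalRing.residue_surjective (R := A) c
        have : (IsLocalRing.residue A a) • x = a • x := by
          rw [← IsLocalRing.ResidueField.algebraMap_eq, algebraMap_smul]
        rw [this]
        exact W.smul_mem a hx }
  haveI : Module.Finite k ↥W' := inferInstance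
  haveI fpW' : Module.FinitePresentation A ↥W' := fpOfFinK (k := k)
  let eW : ↥W' ≃ₗ[A] ↥W :=
    { toFun := fun x => ⟨x.1, x.2⟩
      invFun := fun x => ⟨x.1, x.2⟩
      map_add' := fun _ _ => rfl
      map_smul' := fun _ _ => rfl
      left_inv := fun _ => rfl
      right_inv := fun _ => rfl }
  haveI fpW : Module.FinitePresentation A ↥W := fpEquiv eW
  haveI fpKerl : Module.FinitePresentation A ↥(LinearMap.ker l) :=
    fpEquiv (M := ↥W) (N := ↥(LinearMap.ker l)) (LinearEquiv.ofBijective φ hφ).symm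
  haveI : Module.FinitePresentation A ↥(LinearMap.ker l.rangeRestrict) := by
    rw [LinearMap.ker_rangeRestrict]
    exact fpKerl
  haveI fpI' : Module.FinitePresentation A ↥I' :=
    Module.finitePresentation_of_ker l.rangeRestrict l.surjective_rangeRestrict
  haveI fpI : Module.FinitePresentation A ↥I :=
    fpEquiv ((Submodule.restrictScalarsEquiv A (TrivSqZeroExt A E)
      (TrivSqZeroExt A E) I).restrictScalars A)
  exact fpAscend (A := A)
end

section
/- Let A be a domain which is not a field, K = Frac(A), and R = A ⋉ K. Let H be an R-submodule of R^m, U = {x ∈ A^m : (x,e) ∈ H for some e ∈ K^m}, and E = {e ∈ K^m : (x,e) ∈ H for some x ∈ A^m}. If H is finitely generated as an R-module and E is a K-subspace of K^m, then U is a finitely generated A-module and H = U ⋉ KU. -/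
/-! The first projection `R^m → A^m` is semilinear along `fst : R → A`, so `U`, the image of `H`,
is finitely generated. Modulo `T = KU` the second projection is semilinear on `H` as well, since
`(a, k) • (x, e) = (a x, a e + k x)` with `k x ∈ T`; its image is a finitely generated `A`-submodule
of the `K`-space `K^m ⧸ T`, closed under `K`-scaling by the hypothesis on `E`. A nonzero such
submodule maps onto `K` under a linear form, making `K` a finite `A`-module and hence `A` a field.
So `E ⊆ T`. Conversely `inr k • (u, e) = (0, k u)` puts `0 ⋉ KU` inside `H`, whence `U ⋉ KU ⊆ H`.
-/

theorem Submodule.eq_bot_of_fg_of_smul_mem {A K V : Type*} [CommRing A] [Field K] [Algebra A K]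
    [AddCommGroup V] [Module K V] [Module A V] [IsScalarTower A K V]
    (hA : ¬IsField A) (hinj : Function.Injective (algebraMap A K))
    {P : Submodule A V} (hP : P.FG) (hK : ∀ (k : K) v, v ∈ P → k • v ∈ P) : P = ⊥ := by
  refine (Submodule.eq_bot_iff P).2 fun v hv => by_contra fun hv0 => ?_
  obtain ⟨φ, hφ⟩ : ∃ φ : Module.Dual K V, φ v ≠ 0 := by
    by_contra! h
    exact hv0 ((Module.forall_dual_apply_eq_zero_iff K v).1 h)
  have htop : P.map (φ.restrictScalars A) = ⊤ := by
    refine eq_top_iff.2 fun k _ => ⟨(k / φ v) • v, hK _ v hv, ?_⟩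
    simp [div_mul_cancel₀ k hφ]
  have : Module.Finite A K := ⟨htop ▸ hP.map _⟩
  exact hA ((Algebra.IsIntegral.isField_iff_isField hinj).2 (Field.toIsField K))

namespace TrivSqZeroExt

section
variable (R M : Type*) [CommSemiring R] [AddCommMonoid M] [Module R M] [Module Rᵐᵒᵖ M]
  [IsCentralScalar R M] (ι : Type*)

instance : RingHomSurjective (fstHom R R M : TrivSqZeroExt R M →+* R) :=
  ⟨fun r => ⟨inl r, fst_inl M r⟩⟩

def fstPi : (ι → TrivSqZeroExt R M) →ₛₗ[(fstHom R R M : TrivSqZeroExt R M →+* R)] (ι → R) where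
  toFun x i := (x i).fst
  map_add' _ _ := rfl
  map_smul' _ _ := rfl

variable {R M ι}

@[simp]
theorem fstPi_apply (x : ι → TrivSqZeroExt R M) (i : ι) : fstPi R M ι x i = (x i).fst := rfl

theorem mem_map_fstPi_iff {H : Submodule (TrivSqZeroExt R M) (ι → TrivSqZeroExt R M)}
    {x : ι → R} : x ∈ H.map (fstPi R M ι) ↔ ∃ e : ι → M,
      (fun i => inl (x i) + inr (e i)) ∈ H := by
  constructor
  · rintro ⟨h, hh, rfl⟩
    exact ⟨fun i => (h i).snd, by simpa [inl_fst_add_inr_snd_eq] using hh⟩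
  · rintro ⟨e, he⟩
    exact ⟨_, he, by ext; simp⟩

end

section
variable {A K ι : Type*} [CommRing A] [Field K] [Algebra A K] [Module Aᵐᵒᵖ K] [IsCentralScalar A K]

theorem snd_smul_pi (r : TrivSqZeroExt A K) (x : ι → TrivSqZeroExt A K) :
    (fun i => ((r • x) i).snd) =
      r.fst • (fun i => (x i).snd) + r.snd • fun i => algebraMap A K (x i).fst := by
  ext i
  simp [snd_mul, Algebra.smul_def, mul_comm]

def sndPiMkQ (H : Submodule (TrivSqZeroExt A K) (ι → TrivSqZeroExt A K))
    (T : Submodule K (ι → K)) (hT : ∀ h ∈ H, (fun i => algebraMap A K (h i).fst) ∈ T) :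
    H →ₛₗ[(fstHom A A K : TrivSqZeroExt A K →+* A)] (ι → K) ⧸ T where
  toFun h := T.mkQ fun i => (h.1 i).snd
  map_add' _ _ := by rw [← map_add]; rfl
  map_smul' r h := by
    have h0 : T.mkQ (r.snd • fun i => algebraMap A K (h.1 i).fst) = 0 := by
      rw [map_smul, Submodule.mkQ_apply, (Submodule.Quotient.mk_eq_zero T).2 (hT h.1 h.2),
        smul_zero]
    simp only [SetLike.val_smul, snd_smul_pi, map_add, h0, add_zero]
    rfl

theorem sndPiMkQ_apply (H : Submodule (TrivSqZeroExt A K) (ι → TrivSqZeroExt A K))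
    (T : Submodule K (ι → K)) (hT : ∀ h ∈ H, (fun i => algebraMap A K (h i).fst) ∈ T) (h : H) :
    sndPiMkQ H T hT h = T.mkQ fun i => (h.1 i).snd := rfl

variable {H : Submodule (TrivSqZeroExt A K) (ι → TrivSqZeroExt A K)}

theorem snd_mem_of_fg (hA : ¬IsField A) (hinj : Function.Injective (algebraMap A K))
    (hH : H.FG) {T : Submodule K (ι → K)}
    (hT : ∀ h ∈ H, (fun i => algebraMap A K (h i).fst) ∈ T)
    (hE : ∀ (k : K) (e : ι → K), (∃ x : ι → A, (fun i => inl (x i) + inr (e i)) ∈ H) →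
      ∃ x : ι → A, (fun i => inl (x i) + inr (k • e i)) ∈ H)
    {h : ι → TrivSqZeroExt A K} (hh : h ∈ H) : (fun i => (h i).snd) ∈ T := by
  have hrange : LinearMap.range (sndPiMkQ H T hT) = ⊥ := by
    refine Submodule.eq_bot_of_fg_of_smul_mem hA hinj ?_ ?_
    · exact LinearMap.range_eq_map (sndPiMkQ H T hT) ▸ ((Submodule.fg_top H).2 hH).map _
    · rintro k _ ⟨h, rfl⟩
      obtain ⟨x, hx⟩ := hE k (fun i => (h.1 i).snd)
        ⟨fun i => (h.1 i).fst, by simpa only [inl_fst_add_inr_snd_eq] using h.2⟩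
      refine ⟨⟨_, hx⟩, ?_⟩
      rw [sndPiMkQ_apply, sndPiMkQ_apply, ← map_smul]
      congr 1
      ext i
      simp
  have := hrange ▸ LinearMap.mem_range_self (sndPiMkQ H T hT) ⟨h, hh⟩
  rwa [Submodule.mem_bot, sndPiMkQ_apply, Submodule.mkQ_apply,
    Submodule.Quotient.mk_eq_zero] at this

theorem inr_mem_of_mem_span {f : ι → K} (hf : f ∈ Submodule.span K
      ((fun (x : ι → A) i => algebraMap A K (x i)) '' (H.map (fstPi A K ι) : Set (ι → A)))) :
    (fun i => inr (f i)) ∈ H := by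
  suffices ∀ k : K, (fun i => inr ((k • f) i)) ∈ H by simpa using this 1
  induction hf using Submodule.span_induction with
  | mem _ hx =>
    obtain ⟨_, ⟨h, hh, rfl⟩, rfl⟩ := hx
    intro k
    convert H.smul_mem (inr k) hh using 1
    ext i <;> simp [Algebra.smul_def, mul_comm]
  | zero =>
    intro k
    convert H.zero_mem using 1
    ext i <;> simp
  | add x y _ _ hx hy =>
    intro k
    convert H.add_mem (hx k) (hy k) using 1
    ext i <;> simp [mul_add]
  | smul c x _ hx =>
    intro k
    simpa [smul_smul, mul_assoc] using hx (k * c)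

theorem mem_iff_fst_mem_and_snd_mem_span (hA : ¬IsField A)
    (hinj : Function.Injective (algebraMap A K)) (hH : H.FG)
    (hE : ∀ (k : K) (e : ι → K), (∃ x : ι → A, (fun i => inl (x i) + inr (e i)) ∈ H) →
      ∃ x : ι → A, (fun i => inl (x i) + inr (k • e i)) ∈ H)
    (h : ι → TrivSqZeroExt A K) :
    h ∈ H ↔ fstPi A K ι h ∈ H.map (fstPi A K ι) ∧ (fun i => (h i).snd) ∈ Submodule.span K
      ((fun (x : ι → A) i => algebraMap A K (x i)) '' (H.map (fstPi A K ι) : Set (ι → A))) := by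
  have hT : ∀ h ∈ H, (fun i => algebraMap A K (h i).fst) ∈ Submodule.span K
      ((fun (x : ι → A) i => algebraMap A K (x i)) '' (H.map (fstPi A K ι) : Set (ι → A))) :=
    fun h hh => Submodule.subset_span ⟨_, ⟨h, hh, rfl⟩, rfl⟩
  refine ⟨fun hh => ⟨⟨h, hh, rfl⟩, snd_mem_of_fg hA hinj hH hT hE hh⟩, ?_⟩
  rintro ⟨hfst, hsnd⟩
  obtain ⟨e, he⟩ := mem_map_fstPi_iff.1 hfst
  have hsplit : h = (fun i => inl ((h i).fst) + inr (e i)) + fun i => inr ((h i).snd - e i) := by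
    ext i <;> simp
  rw [hsplit]
  exact H.add_mem he (inr_mem_of_mem_span (Submodule.sub_mem _ hsnd
    (by simpa using snd_mem_of_fg hA hinj hH hT hE he)))

end

end TrivSqZeroExt

theorem trivSqZeroExt_fg_submodule_general (A : Type*) [CommRing A] (hA : ¬IsField A)
    (K : Type*) [Field K] [Algebra A K] [IsFractionRing A K]
    [Module Aᵐᵒᵖ K] [IsCentralScalar A K]
    (m : ℕ)
    (H : Submodule (TrivSqZeroExt A K) (Fin m → TrivSqZeroExt A K))
    (U : Submodule A (Fin m → A))
    (hU : ∀ x : Fin m → A, x ∈ U ↔ ∃ e : Fin m → K,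
      (fun i => TrivSqZeroExt.inl (x i) + TrivSqZeroExt.inr (e i)) ∈ H)
    (hH : H.FG)
    (hE : ∀ (k : K) (e : Fin m → K),
      (∃ x : Fin m → A, (fun i => TrivSqZeroExt.inl (x i) + TrivSqZeroExt.inr (e i)) ∈ H) →
      ∃ x : Fin m → A,
        (fun i => TrivSqZeroExt.inl (x i) + TrivSqZeroExt.inr (k • e i)) ∈ H) :
    U.FG ∧ ∀ h : Fin m → TrivSqZeroExt A K,
      h ∈ H ↔ ((fun i => (h i).fst) ∈ U ∧
        (fun i => (h i).snd) ∈ Submodule.span K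
          ((fun (x : Fin m → A) (i : Fin m) => algebraMap A K (x i)) ''
            (U : Set (Fin m → A)))) := by
  obtain rfl : U = H.map (TrivSqZeroExt.fstPi A K (Fin m)) := by
    ext x
    rw [hU, TrivSqZeroExt.mem_map_fstPi_iff]
  exact ⟨hH.map _, TrivSqZeroExt.mem_iff_fst_mem_and_snd_mem_span hA
    (IsFractionRing.injective A K) hH hE⟩

/-- Lemma 3.2: let `A` be a domain (not a field) with fraction field `K`, `R = A ⋉ K`,
`H` an `R`-submodule of `R^m`, `U = {x ∈ A^m : (x,e) ∈ H for some e}`, and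
`E = {e ∈ K^m : (x,e) ∈ H for some x}`. If `H` is finitely generated and `E` is a
`K`-vector space (closed under `K`-scaling), then `U` is a finitely generated `A`-module
and `H = U ⋉ KU`, where `KU` is the `K`-span of `U` in `K^m`. -/
theorem trivSqZeroExt_fg_submodule (A : Type*) [CommRing A] [IsDomain A] (hA : ¬IsField A)
    (K : Type*) [Field K] [Algebra A K] [IsFractionRing A K]
    [Module Aᵐᵒᵖ K] [IsCentralScalar A K]
    (m : ℕ)
    (H : Submodule (TrivSqZeroExt A K) (Fin m → TrivSqZeroExt A K))
    (U : Submodule A (Fin m → A))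
    (hU : ∀ x : Fin m → A, x ∈ U ↔ ∃ e : Fin m → K,
      (fun i => TrivSqZeroExt.inl (x i) + TrivSqZeroExt.inr (e i)) ∈ H)
    (hH : H.FG)
    (hE : ∀ (k : K) (e : Fin m → K),
      (∃ x : Fin m → A, (fun i => TrivSqZeroExt.inl (x i) + TrivSqZeroExt.inr (e i)) ∈ H) →
      ∃ x : Fin m → A,
        (fun i => TrivSqZeroExt.inl (x i) + TrivSqZeroExt.inr (k • e i)) ∈ H) :
    U.FG ∧ ∀ h : Fin m → TrivSqZeroExt A K,
      h ∈ H ↔ ((fun i => (h i).fst) ∈ U ∧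
        (fun i => (h i).snd) ∈ Submodule.span K
          ((fun (x : Fin m → A) (i : Fin m) => algebraMap A K (x i)) ''
            (U : Set (Fin m → A)))) :=
  trivSqZeroExt_fg_submodule_general A hA K m H U hU hH hE
end

section
/- Let (A, M) be a local domain which is not a field, E = A/M, and R = A ⋉ E. Let x be a nonzero element of M, and J = R·(x, 1̄) the principal ideal generated by (x, 1̄). Then (x, 0) ∉ J, although x lies in the ideal {a ∈ A : (a,e) ∈ J for some e ∈ E} and thus J is strictly contained in (Ax) ⋉ E. -/
/-!
If `c · (x, 1̄) = (x, 0)`, the second components give `c.fst ∈ M` (as `x` kills `A/M`), and the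
first give `c.fst * x = x`; since `1 - c.fst` is a unit, `x = 0`. The first projection `R → A` is
a ring map, so it sends `J` into `Ax`.
-/

open IsLocalRing TrivSqZeroExt

theorem TrivSqZeroExt.fst_mem_span_singleton {R M : Type*} [CommRing R] [AddCommGroup M]
    [Module R M] [Module Rᵐᵒᵖ M] [IsCentralScalar R M] {g y : TrivSqZeroExt R M}
    (hy : y ∈ Ideal.span {g}) : y.fst ∈ Ideal.span {g.fst} := by
  simpa [Ideal.map_span] using Ideal.mem_map_of_mem (fstHom R R M) hy

theorem TrivSqZeroExt.exists_mem_mul_eq_of_inl_mem_span {R : Type*} [CommRing R] {I : Ideal R}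
    {x : R} (hx : x ∈ I) (h : inl x ∈ Ideal.span {inl x + inr (Ideal.Quotient.mk I 1)}) :
    ∃ a ∈ I, a * x = x := by
  obtain ⟨c, hc⟩ := Ideal.mem_span_singleton'.1 h
  have hx_smul (e : R ⧸ I) : x • e = 0 := by
    rw [Algebra.smul_def, Ideal.Quotient.algebraMap_eq, Ideal.Quotient.eq_zero_iff_mem.2 hx,
      zero_mul]
  have hsnd : c.fst • (1 : R ⧸ I) = 0 := by simpa [snd_mul, hx_smul] using congrArg snd hc
  refine ⟨c.fst, ?_, by simpa using congrArg fst hc⟩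
  rwa [Algebra.smul_def, mul_one, Ideal.Quotient.algebraMap_eq, Ideal.Quotient.eq_zero_iff_mem]
    at hsnd

theorem IsLocalRing.eq_zero_of_mul_eq_self {A : Type*} [CommRing A] [IsLocalRing A] {a x : A}
    (ha : a ∈ maximalIdeal A) (h : a * x = x) : x = 0 :=
  (isUnit_one_sub_self_of_mem_nonunits a ha).mul_right_eq_zero.1 <| by
    rw [sub_mul, one_mul, h, sub_self]

theorem trivSqZeroExt_span_ne_general (A : Type*) [CommRing A] [IsLocalRing A]
    (x : A) (hx : x ∈ IsLocalRing.maximalIdeal A) (hx0 : x ≠ 0)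
    (J : Ideal (TrivSqZeroExt A (A ⧸ IsLocalRing.maximalIdeal A)))
    (hJ : J = Ideal.span {TrivSqZeroExt.inl x +
      TrivSqZeroExt.inr (Ideal.Quotient.mk (IsLocalRing.maximalIdeal A) 1)}) :
    TrivSqZeroExt.inl x ∉ J ∧
      (∃ e : A ⧸ IsLocalRing.maximalIdeal A, TrivSqZeroExt.inl x + TrivSqZeroExt.inr e ∈ J) ∧
      ∀ y ∈ J, TrivSqZeroExt.fst y ∈ Ideal.span {x} := by
  subst hJ
  refine ⟨fun h => hx0 ?_, ⟨_, Ideal.subset_span rfl⟩,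
    fun y hy => by simpa using fst_mem_span_singleton hy⟩
  obtain ⟨a, ha, hax⟩ := exists_mem_mul_eq_of_inl_mem_span hx h
  exact eq_zero_of_mul_eq_self ha hax

/-- Let `(A, M)` be a local domain which is not a field, `E = A/M`, `R = A ⋉ E`, and
`J = R·(x, 1̄)` for a nonzero `x ∈ M`. Then `(x, 0) ∉ J`, while `x` lies in
`{a : (a, e) ∈ J for some e}`; moreover `J ⊆ (Ax) ⋉ E`, so `J ⊊ (Ax) ⋉ E`. -/
theorem trivSqZeroExt_span_ne (A : Type*) [CommRing A] [IsLocalRing A] [IsDomain A]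
    (hA : ¬IsField A)
    (x : A) (hx : x ∈ IsLocalRing.maximalIdeal A) (hx0 : x ≠ 0)
    (J : Ideal (TrivSqZeroExt A (A ⧸ IsLocalRing.maximalIdeal A)))
    (hJ : J = Ideal.span {TrivSqZeroExt.inl x +
      TrivSqZeroExt.inr (Ideal.Quotient.mk (IsLocalRing.maximalIdeal A) 1)}) :
    TrivSqZeroExt.inl x ∉ J ∧
      (∃ e : A ⧸ IsLocalRing.maximalIdeal A, TrivSqZeroExt.inl x + TrivSqZeroExt.inr e ∈ J) ∧
      ∀ y ∈ J, TrivSqZeroExt.fst y ∈ Ideal.span {x} :=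
  trivSqZeroExt_span_ne_general A x hx hx0 J hJ
end

section
/- Let A be an integral domain which is not a field, K = Frac(A), and R = A ⋉ K. For any nonzero ideal I of A and any A-submodule E of K with IK ⊆ E, the inverse (I ⋉ E)^{-1} of the fractional ideal I ⋉ E of R equals I^{-1} ⋉ K; in particular it coincides with (I ⋉ IK)^{-1}. -/
section aux
variable (A : Type*) [CommRing A] [IsDomain A]
    (K : Type*) [Field K] [Algebra A K] [IsFractionRing A K]
    [Module Aᵐᵒᵖ K] [IsCentralScalar A K]

theorem aux_mem_nzd {x : TrivSqZeroExt A K} (hx : x.fst ≠ 0) :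
    x ∈ nonZeroDivisors (TrivSqZeroExt A K) := by
  rw [mem_nonZeroDivisors_iff_right]
  intro y hy
  have h1 : y.fst * x.fst = 0 := by
    have := congrArg TrivSqZeroExt.fst hy
    simpa using this
  have hf : y.fst = 0 := by
    rcases mul_eq_zero.mp h1 with h | h
    · exact h
    · exact absurd h hx
  have h2 : y.fst • x.snd + MulOpposite.op x.fst • y.snd = 0 := by
    have := congrArg TrivSqZeroExt.snd hy
    simpa [TrivSqZeroExt.snd_mul] using this
  rw [hf, zero_smul, zero_add, op_smul_eq_smul] at h2
  have h3 : algebraMap A K x.fst * y.snd = 0 := by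
    rwa [Algebra.smul_def] at h2
  have h4 : y.snd = 0 := by
    rcases mul_eq_zero.mp h3 with h | h
    · exact absurd h ((map_ne_zero_iff _ (IsFractionRing.injective A K)).mpr hx)
    · exact h
  exact TrivSqZeroExt.ext hf h4

theorem aux_fst_ne_zero {x : TrivSqZeroExt A K}
    (hx : x ∈ nonZeroDivisors (TrivSqZeroExt A K)) : x.fst ≠ 0 := by
  intro h0
  have := mem_nonZeroDivisors_iff_right.mp hx (TrivSqZeroExt.inr 1 : TrivSqZeroExt A K) ?_
  · exact (one_ne_zero : (1:K) ≠ 0) (by simpa using congrArg TrivSqZeroExt.snd this)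
  · apply TrivSqZeroExt.ext
    · simp
    · simp [TrivSqZeroExt.snd_mul, h0]
end aux

section key
set_option linter.unusedSectionVars false
variable (A : Type*) [CommRing A] [IsDomain A]
    (K : Type*) [Field K] [Algebra A K] [IsFractionRing A K]
    [Module Aᵐᵒᵖ K] [IsCentralScalar A K]

local notation "R" => TrivSqZeroExt A K
local notation "Q" => Localization (nonZeroDivisors (TrivSqZeroExt A K))

theorem aux_range_iff (y j : R) (s : nonZeroDivisors R) :
    (IsLocalization.mk' Q y s * algebraMap R Q j ∈ (algebraMap R Q).range)
      ↔ ∃ r : R, y * j = r * s := by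
  have hinj : Function.Injective (algebraMap R Q) :=
    IsLocalization.injective _ (le_refl (nonZeroDivisors R))
  have hmul : IsLocalization.mk' Q y s * algebraMap R Q j
      = IsLocalization.mk' Q (y * j) s := by
    rw [mul_comm, IsLocalization.mul_mk'_eq_mk'_of_mul, mul_comm j y]
  rw [hmul]
  constructor
  · rintro ⟨r, hr⟩
    have : algebraMap R Q (r * s) = algebraMap R Q (y * j) := by
      rw [map_mul, hr, IsLocalization.mk'_spec]
    exact ⟨r, (hinj this).symm⟩
  · rintro ⟨r, hr⟩
    refine ⟨r, ?_⟩
    rw [IsLocalization.eq_mk'_iff_mul_eq, ← map_mul, ← hr]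

theorem aux_key (I : Ideal A) (E : Submodule A K) (y : R)
    (s : nonZeroDivisors R) (hs : (s : R).snd = 0) :
    ((∀ j : R, j.fst ∈ I → j.snd ∈ E →
        IsLocalization.mk' Q y s * algebraMap R Q j ∈ (algebraMap R Q).range) ↔
      ∀ a ∈ I, ∃ c : A, y.fst * a = (s : R).fst * c) := by
  have hsf : (s : R).fst ≠ 0 := aux_fst_ne_zero A K s.2
  have hsfK : algebraMap A K (s : R).fst ≠ 0 :=
    (map_ne_zero_iff _ (IsFractionRing.injective A K)).mpr hsf
  constructor
  · intro h a ha
    obtain ⟨r, hr⟩ := (aux_range_iff A K y (TrivSqZeroExt.inl a) s).mp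
      (h (TrivSqZeroExt.inl a) (by simpa) (by simp))
    refine ⟨r.fst, ?_⟩
    have := congrArg TrivSqZeroExt.fst hr
    simpa [mul_comm] using this
  · intro h j hj1 hj2
    obtain ⟨c, hc⟩ := h j.fst hj1
    rw [aux_range_iff]
    refine ⟨((c, (algebraMap A K (s : R).fst)⁻¹ *
      (y.fst • j.snd + j.fst • y.snd)) : R), ?_⟩
    apply TrivSqZeroExt.ext
    · erw [TrivSqZeroExt.fst_mul, TrivSqZeroExt.fst_mul]
      simpa [mul_comm] using hc
    · rw [TrivSqZeroExt.snd_mul]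
      erw [TrivSqZeroExt.snd_mul]
      simp only [op_smul_eq_smul, hs, smul_zero, zero_add, TrivSqZeroExt.snd_mk,
        TrivSqZeroExt.fst_mk]
      rw [Algebra.smul_def ((s : R).fst), ← mul_assoc, mul_inv_cancel₀ hsfK, one_mul]
end key



/-- Let `A` be a domain which is not a field, `K = Frac(A)`, `R = A ⋉ K`, and
`Q = Q(R)` the total quotient ring of `R` (realized as the localization of `R` at its
non-zerodivisors).  For any nonzero ideal `I` of `A` and any `A`-submodule `E` of `K`
with `IK ⊆ E`, the inverse `(I ⋉ E)⁻¹ = {q ∈ Q : q · (I ⋉ E) ⊆ R}` equals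
`I⁻¹ ⋉ K`; in particular it coincides with `(I ⋉ IK)⁻¹`.  Concretely:
every `q ∈ Q` can be written `q = y/s` with `s = (b, 0)` regular; such a `q` lies in
`(I ⋉ E)⁻¹` iff `y.fst/s.fst ∈ I⁻¹` (i.e. `y.fst · I ⊆ s.fst · A`), the second
component being unrestricted; and membership in `(I ⋉ E)⁻¹` and `(I ⋉ IK)⁻¹` agree. -/
theorem trivSqZeroExt_fractionalIdeal_inv (A : Type*) [CommRing A] [IsDomain A]
    (hA : ¬IsField A)
    (K : Type*) [Field K] [Algebra A K] [IsFractionRing A K]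
    [Module Aᵐᵒᵖ K] [IsCentralScalar A K]
    (I : Ideal A) (hI : I ≠ ⊥)
    (E : Submodule A K) (hE : I • (⊤ : Submodule A K) ≤ E) :
    (∀ q : Localization (nonZeroDivisors (TrivSqZeroExt A K)),
      ∃ (y : TrivSqZeroExt A K) (s : nonZeroDivisors (TrivSqZeroExt A K)),
        (s : TrivSqZeroExt A K).snd = 0 ∧
          q = IsLocalization.mk' (Localization (nonZeroDivisors (TrivSqZeroExt A K))) y s) ∧
    (∀ (y : TrivSqZeroExt A K) (s : nonZeroDivisors (TrivSqZeroExt A K)),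
      (s : TrivSqZeroExt A K).snd = 0 →
      ((∀ j : TrivSqZeroExt A K, j.fst ∈ I → j.snd ∈ E →
          IsLocalization.mk' (Localization (nonZeroDivisors (TrivSqZeroExt A K))) y s *
              algebraMap (TrivSqZeroExt A K)
                (Localization (nonZeroDivisors (TrivSqZeroExt A K))) j ∈
            (algebraMap (TrivSqZeroExt A K)
              (Localization (nonZeroDivisors (TrivSqZeroExt A K)))).range) ↔
        ∀ a ∈ I, ∃ c : A, y.fst * a = (s : TrivSqZeroExt A K).fst * c)) ∧
    (∀ q : Localization (nonZeroDivisors (TrivSqZeroExt A K)),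
      ((∀ j : TrivSqZeroExt A K, j.fst ∈ I → j.snd ∈ E →
          q * algebraMap (TrivSqZeroExt A K)
              (Localization (nonZeroDivisors (TrivSqZeroExt A K))) j ∈
            (algebraMap (TrivSqZeroExt A K)
              (Localization (nonZeroDivisors (TrivSqZeroExt A K)))).range) ↔
        (∀ j : TrivSqZeroExt A K, j.fst ∈ I → j.snd ∈ I • (⊤ : Submodule A K) →
          q * algebraMap (TrivSqZeroExt A K)
              (Localization (nonZeroDivisors (TrivSqZeroExt A K))) j ∈
            (algebraMap (TrivSqZeroExt A K)
              (Localization (nonZeroDivisors (TrivSqZeroExt A K)))).range))) := by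
  have hsurj : ∀ q : Localization (nonZeroDivisors (TrivSqZeroExt A K)),
      ∃ (y : TrivSqZeroExt A K) (s : nonZeroDivisors (TrivSqZeroExt A K)),
        (s : TrivSqZeroExt A K).snd = 0 ∧
          q = IsLocalization.mk' (Localization (nonZeroDivisors (TrivSqZeroExt A K))) y s := by
    intro q
    obtain ⟨⟨y', s'⟩, hq⟩ := IsLocalization.mk'_surjective (nonZeroDivisors (TrivSqZeroExt A K)) q
    have hsf : (s' : TrivSqZeroExt A K).fst ≠ 0 := aux_fst_ne_zero A K s'.2
    set t : TrivSqZeroExt A K := ((s' : TrivSqZeroExt A K).fst, -(s' : TrivSqZeroExt A K).snd)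
    have ht : t ∈ nonZeroDivisors (TrivSqZeroExt A K) := aux_mem_nzd A K hsf
    refine ⟨y' * t, s' * ⟨t, ht⟩, ?_, ?_⟩
    · rw [Submonoid.coe_mul, TrivSqZeroExt.snd_mul]
      simp [t, op_smul_eq_smul]
    · rw [IsLocalization.mk'_cancel _ _ ⟨t, ht⟩, show IsLocalization.mk' _ y' s' = q from hq]
  refine ⟨hsurj, fun y s hs => aux_key A K I E y s hs, fun q => ?_⟩
  obtain ⟨y, s, hs, rfl⟩ := hsurj q
  rw [aux_key A K I E y s hs, aux_key A K I (I • (⊤ : Submodule A K)) y s hs]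
end
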